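/- The reduct of M to the language L₀ = {E_n : n ≥ 1} is a countable ultrahomogeneous L₀-structure whose age is K₀; hence this reduct is isomorphic to M₀, i.e., M is an expansion of M₀. -/

import Mathlib

open FirstOrder Language Structure CategoryTheory

/-- The language `L₀` with a `2n`-ary relation symbol `E_n` for each `n ≥ 1`. -/
def L₀ : FirstOrder.Language where
  Functions := fun _ => Empty
  Relations := fun k => {n : ℕ // 0 < n ∧ k = n + n}

/-- The relation symbol `E_n`. -/
def Esymb (n : ℕ) (hn : 0 < n) : L₀.Relations (n + n) := ⟨n, hn, rfl⟩

/-- `E_n(x̄, ȳ)` in an `L₀`-structure. -/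
def ERel (M : Type*) [L₀.Structure M] (n : ℕ) (hn : 0 < n) (x y : Fin n → M) : Prop :=
  Structure.RelMap (Esymb n hn) (Fin.append x y)

/-- The defining conditions for membership in `K₀`: each `E_n` holds only on pairs of
injective `n`-tuples, is invariant under permuting the entries of each tuple separately,
and induces an equivalence relation on `n`-element subsets. -/
def IsK0Struct (C : Type*) [L₀.Structure C] : Prop :=
  ∀ (n : ℕ) (hn : 0 < n),
    (∀ x y : Fin n → C, ERel C n hn x y → Function.Injective x ∧ Function.Injective y) ∧
    (∀ (x y : Fin n → C) (σ τ : Equiv.Perm (Fin n)),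
        ERel C n hn x y → ERel C n hn (x ∘ σ) (y ∘ τ)) ∧
    (∀ x : Fin n → C, Function.Injective x → ERel C n hn x x) ∧
    (∀ x y : Fin n → C, ERel C n hn x y → ERel C n hn y x) ∧
    (∀ x y z : Fin n → C, ERel C n hn x y → ERel C n hn y z → ERel C n hn x z)

/-- The class `K₀` of finite `L₀`-structures as above. -/
def K₀ : Set (Bundled L₀.Structure) := {C | Finite C ∧ IsK0Struct C}

/-- The language `L_P`: a `2n`-ary symbol `E_n` for each `n ≥ 1` and a `2n`-ary symbol
`<_n` for each `n ∈ P`. -/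
def LP (P : Set ℕ) : FirstOrder.Language where
  Functions := fun _ => Empty
  Relations := fun k => {n : ℕ // 0 < n ∧ k = n + n} ⊕ {n : ℕ // n ∈ P ∧ k = n + n}

/-- The symbol `E_n` of `L_P`. -/
def EsymbP (P : Set ℕ) (n : ℕ) (hn : 0 < n) : (LP P).Relations (n + n) :=
  Sum.inl ⟨n, hn, rfl⟩

/-- The symbol `<_n` of `L_P`. -/
def LTsymbP (P : Set ℕ) (n : ℕ) (hn : n ∈ P) : (LP P).Relations (n + n) :=
  Sum.inr ⟨n, hn, rfl⟩

/-- `E_n(x̄, ȳ)` in an `L_P`-structure. -/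
def ERelP (P : Set ℕ) (M : Type*) [i : (LP P).Structure M] (n : ℕ) (hn : 0 < n)
    (x y : Fin n → M) : Prop :=
  @Structure.RelMap (LP P) M i (n + n) (EsymbP P n hn) (Fin.append x y)

/-- `x̄ <_n ȳ` in an `L_P`-structure. -/
def LTRelP (P : Set ℕ) (M : Type*) [i : (LP P).Structure M] (n : ℕ) (hn : n ∈ P)
    (x y : Fin n → M) : Prop :=
  @Structure.RelMap (LP P) M i (n + n) (LTsymbP P n hn) (Fin.append x y)

/-- The defining conditions for membership in `K_P`: the `{E_n}`-part satisfies the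
`K₀`-conditions, and for `n ∈ P` the relation `<_n` holds only on injective tuples, is
`E_n`-invariant, and induces a strict linear order on `E_n`-classes. -/
def IsKPStruct (P : Set ℕ) (C : Type*) [(LP P).Structure C] : Prop :=
  (∀ (n : ℕ) (hn : 0 < n),
    (∀ x y : Fin n → C, ERelP P C n hn x y → Function.Injective x ∧ Function.Injective y) ∧
    (∀ (x y : Fin n → C) (σ τ : Equiv.Perm (Fin n)),
        ERelP P C n hn x y → ERelP P C n hn (x ∘ σ) (y ∘ τ)) ∧
    (∀ x : Fin n → C, Function.Injective x → ERelP P C n hn x x) ∧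
    (∀ x y : Fin n → C, ERelP P C n hn x y → ERelP P C n hn y x) ∧
    (∀ x y z : Fin n → C, ERelP P C n hn x y → ERelP P C n hn y z → ERelP P C n hn x z)) ∧
  (∀ (n : ℕ) (hn : n ∈ P) (hn0 : 0 < n),
    (∀ x y : Fin n → C, LTRelP P C n hn x y → Function.Injective x ∧ Function.Injective y) ∧
    (∀ x x' y y' : Fin n → C, ERelP P C n hn0 x x' → ERelP P C n hn0 y y' →
        LTRelP P C n hn x y → LTRelP P C n hn x' y') ∧
    (∀ x y : Fin n → C, LTRelP P C n hn x y → ¬ ERelP P C n hn0 x y) ∧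
    (∀ x y z : Fin n → C, LTRelP P C n hn x y → LTRelP P C n hn y z → LTRelP P C n hn x z) ∧
    (∀ x y : Fin n → C, Function.Injective x → Function.Injective y →
        ¬ ERelP P C n hn0 x y → LTRelP P C n hn x y ∨ LTRelP P C n hn y x))

/-- The class `K_P` of finite `L_P`-structures as above. -/
def KP (P : Set ℕ) : Set (Bundled (LP P).Structure) := {C | Finite C ∧ IsKPStruct P C}

/-- The inclusion of `L₀` into `L_P`. -/
def phiP (P : Set ℕ) : L₀ →ᴸ LP P where
  onFunction := fun _ e => e
  onRelation := fun _ r => Sum.inl r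

/-!
Every finite substructure of `M` lies in `K_P`, so `M` satisfies the `K_P` axioms. The key step
is an extension property of the `L₀`-reduct: given embeddings `g : A ↪ T` in `K₀` and `f : A ↪ M`
of `L₀`-structures, the orders `<_n` of `M` transported along `f` and `g` form a strict partial
order on the `E_n`-classes of `T`. Extending it linearly (Szpilrajn) expands `T` to a member of
`K_P` into which `A`, with the structure induced from `M`, embeds along `g`; ultrahomogeneity of
`M` then extends `f` to `T`. The expansion with no constraint embeds every member of `K₀` into the
reduct, the extension property gives the back-and-forth condition, and uniqueness of Fraïssé
limits identifies the reduct with `M₀`.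
-/

section StrictOrderMod

variable {α : Type*} (E : α → α → Prop)

/-- `E` is a partial equivalence relation here: the relations `E_n` are reflexive exactly on
injective tuples. -/
structure IsStrictOrderMod (R : α → α → Prop) : Prop where
  dom : ∀ {a b}, R a b → E a a ∧ E b b
  congr : ∀ {a a' b b'}, E a a' → E b b' → R a b → R a' b'
  not_rel : ∀ {a b}, R a b → ¬ E a b
  trans : ∀ {a b c}, R a b → R b c → R a c

variable {E}

/-- Szpilrajn's extension theorem, applied on the quotient of the domain of `E`. -/
theorem IsStrictOrderMod.exists_total_extension (hsymm : ∀ a b, E a b → E b a)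
    (htrans : ∀ a b c, E a b → E b c → E a c)
    {R : α → α → Prop} (hR : IsStrictOrderMod E R) :
    ∃ S, IsStrictOrderMod E S ∧ (∀ a b, E a a → E b b → ¬ E a b → S a b ∨ S b a) ∧
      ∀ a b, R a b → S a b := by
  let st : Setoid {a // E a a} := ⟨fun a b => E a b, ⟨fun a => a.2, hsymm _ _, htrans _ _ _⟩⟩
  let Q := Quotient st
  let rq : Q → Q → Prop := Quotient.lift₂ (fun a b => R a b) fun _ _ _ _ ha hb =>
    propext ⟨hR.congr ha hb, hR.congr (hsymm _ _ ha) (hsymm _ _ hb)⟩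
  have : IsStrictOrder Q rq :=
    { irrefl := Quotient.ind fun a h => hR.not_rel h a.2
      trans := Quotient.ind fun _ => Quotient.ind fun _ => Quotient.ind fun _ => hR.trans }
  let _ := partialOrderOfSO rq
  let φ : {a // E a a} → LinearExtension Q := fun a => toLinearExtension ⟦a⟧
  have hφ_eq (a b : α) (ha : E a a) (hb : E b b) : φ ⟨a, ha⟩ = φ ⟨b, hb⟩ ↔ E a b :=
    Quotient.eq (r := st)
  have hφ_lt {a b : {a // E a a}} (h : R a b) : φ a < φ b :=
    toLinearExtension.monotone.strictMono_of_injective (fun _ _ h => h) (show rq ⟦a⟧ ⟦b⟧ from h)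
  refine ⟨fun a b => ∃ (ha : E a a) (hb : E b b), φ ⟨a, ha⟩ < φ ⟨b, hb⟩,
    ⟨fun ⟨ha, hb, _⟩ => ⟨ha, hb⟩, ?_, ?_, ?_⟩, ?_, ?_⟩
  · rintro a a' b b' haa' hbb' ⟨ha, hb, hab⟩
    have ha' := htrans _ _ _ (hsymm _ _ haa') haa'
    have hb' := htrans _ _ _ (hsymm _ _ hbb') hbb'
    refine ⟨ha', hb', ?_⟩
    rwa [← (hφ_eq a a' ha ha').2 haa', ← (hφ_eq b b' hb hb').2 hbb']
  · rintro a b ⟨ha, hb, hab⟩ hE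
    exact hab.ne ((hφ_eq a b ha hb).2 hE)
  · rintro a b c ⟨ha, hb, hab⟩ ⟨_, hc, hbc⟩
    exact ⟨ha, hc, hab.trans hbc⟩
  · intro a b ha hb hE
    rcases lt_or_gt_of_ne (mt (hφ_eq a b ha hb).1 hE) with h | h
    · exact Or.inl ⟨ha, hb, h⟩
    · exact Or.inr ⟨hb, ha, h⟩
  · intro a b hab
    obtain ⟨ha, hb⟩ := hR.dom hab
    exact ⟨ha, hb, hφ_lt (a := ⟨a, ha⟩) (b := ⟨b, hb⟩) hab⟩

end StrictOrderMod

instance : L₀.IsRelational := fun _ => inferInstanceAs (IsEmpty Empty)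

instance (P : Set ℕ) : (LP P).IsRelational := fun _ => inferInstanceAs (IsEmpty Empty)

theorem Fin.comp_append {α β : Type*} {m n : ℕ} (f : α → β) (x : Fin m → α) (y : Fin n → α) :
    f ∘ Fin.append x y = Fin.append (f ∘ x) (f ∘ y) := by
  funext j
  refine Fin.addCases (fun i => ?_) (fun i => ?_) j <;>
    simp only [Fin.append_left, Fin.append_right, Function.comp_apply]

section Structures

variable {L L' : FirstOrder.Language} {A M N : Type*}

theorem FirstOrder.Language.Embedding.relMap_append_comp [L.Structure M] [L.Structure N]
    (e : M ↪[L] N) {n : ℕ} (r : L.Relations (n + n)) (x y : Fin n → M) :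
    RelMap r (Fin.append (e ∘ x) (e ∘ y)) ↔ RelMap r (Fin.append x y) := by
  rw [← Fin.comp_append, e.map_rel]

abbrev FirstOrder.Language.Structure.comap [L.IsRelational] [L.Structure M] (f : A → M) :
    L.Structure A where
  funMap F := isEmptyElim F
  RelMap r x := RelMap r (f ∘ x)

def FirstOrder.Language.Embedding.ofComap [L.IsRelational] [L.Structure M] {f : A → M}
    (hf : Function.Injective f) : @Embedding L A M (Structure.comap f) _ :=
  @Embedding.mk L A M (Structure.comap f) _ ⟨f, hf⟩ (fun F => isEmptyElim F) fun _ _ => Iff.rfl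

def FirstOrder.Language.Embedding.reduct (ϕ : L →ᴸ L') [L.Structure M] [L'.Structure M]
    [ϕ.IsExpansionOn M] [L'.Structure N] (e : M ↪[L'] N) : @Embedding L M N _ (ϕ.reduct N) :=
  @Embedding.mk L M N _ (ϕ.reduct N) e.toEmbedding
    (fun F x => by
      show e (funMap F x) = funMap (ϕ.onFunction F) (e ∘ x)
      rw [← ϕ.map_onFunction F x]
      exact e.map_fun _ x)
    fun r x => by
      show RelMap (ϕ.onRelation r) (e ∘ x) ↔ RelMap r x
      rw [← ϕ.map_onRelation r x]
      exact e.map_rel _ x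

end Structures

section Transfer

variable {P : Set ℕ} {M N : Type*}

theorem FirstOrder.Language.Embedding.eRel_comp_iff [L₀.Structure M] [L₀.Structure N]
    (e : M ↪[L₀] N) {n : ℕ} (hn : 0 < n) (x y : Fin n → M) :
    ERel N n hn (e ∘ x) (e ∘ y) ↔ ERel M n hn x y :=
  e.relMap_append_comp _ x y

theorem FirstOrder.Language.Embedding.eRelP_comp_iff [(LP P).Structure M] [(LP P).Structure N]
    (e : M ↪[LP P] N) {n : ℕ} (hn : 0 < n) (x y : Fin n → M) :
    ERelP P N n hn (e ∘ x) (e ∘ y) ↔ ERelP P M n hn x y :=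
  e.relMap_append_comp _ x y

theorem FirstOrder.Language.Embedding.ltRelP_comp_iff [(LP P).Structure M] [(LP P).Structure N]
    (e : M ↪[LP P] N) {n : ℕ} (hn : n ∈ P) (x y : Fin n → M) :
    LTRelP P N n hn (e ∘ x) (e ∘ y) ↔ LTRelP P M n hn x y :=
  e.relMap_append_comp _ x y

theorem IsK0Struct.of_embedding [L₀.Structure M] [L₀.Structure N] (hN : IsK0Struct N)
    (e : M ↪[L₀] N) : IsK0Struct M := by
  intro n hn
  obtain ⟨hinj, hperm, hrefl, hsymm, htrans⟩ := hN n hn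
  have he := e.eRel_comp_iff hn
  refine ⟨fun x y h => ?_, fun x y σ τ h => ?_, fun x hx => ?_, fun x y h => ?_,
    fun x y z hxy hyz => ?_⟩
  · obtain ⟨hx, hy⟩ := hinj _ _ ((he x y).2 h)
    exact ⟨hx.of_comp, hy.of_comp⟩
  · exact (he _ _).1 (hperm _ _ σ τ ((he x y).2 h))
  · exact (he x x).1 (hrefl _ (e.injective.comp hx))
  · exact (he y x).1 (hsymm _ _ ((he x y).2 h))
  · exact (he x z).1 (htrans _ _ _ ((he x y).2 hxy) ((he y z).2 hyz))

theorem exists_isKPStruct_lift {M : Type} [(LP P).Structure M] (hage : (LP P).age M ⊆ KP P)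
    {n : ℕ} (x y z w : Fin n → M) :
    ∃ (N : Type) (_ : (LP P).Structure N) (e : N ↪[LP P] M) (x' y' z' w' : Fin n → N),
      IsKPStruct P N ∧ e ∘ x' = x ∧ e ∘ y' = y ∧ e ∘ z' = z ∧ e ∘ w' = w := by
  let S := Substructure.closure (LP P) (Set.range x ∪ Set.range y ∪ Set.range z ∪ Set.range w)
  have hS : S.FG := Substructure.fg_closure (by simp [Set.finite_range])
  exact ⟨S, inferInstance, S.subtype,
    fun i => ⟨x i, Substructure.subset_closure (by simp)⟩,
    fun i => ⟨y i, Substructure.subset_closure (by simp)⟩,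
    fun i => ⟨z i, Substructure.subset_closure (by simp)⟩,
    fun i => ⟨w i, Substructure.subset_closure (by simp)⟩,
    (hage (age.fg_substructure hS)).2, rfl, rfl, rfl, rfl⟩

end Transfer

theorem isKPStruct_of_age_subset {P : Set ℕ} {M : Type} [(LP P).Structure M]
    (hage : (LP P).age M ⊆ KP P) : IsKPStruct P M := by
  refine ⟨fun n hn => ⟨fun x y h => ?_, fun x y σ τ h => ?_, fun x hx => ?_, fun x y h => ?_,
      fun x y z hxy hyz => ?_⟩,
    fun n hn hn0 => ⟨fun x y h => ?_, fun x x' y y' hxx' hyy' h => ?_, fun x y h hE => ?_,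
      fun x y z hxy hyz => ?_, fun x y hx hy hE => ?_⟩⟩
  · obtain ⟨N, _, e, x, y, -, -, hN, rfl, rfl, -, -⟩ := exists_isKPStruct_lift hage x y y y
    obtain ⟨hx, hy⟩ := (hN.1 n hn).1 x y ((e.eRelP_comp_iff hn x y).1 h)
    exact ⟨e.injective.comp hx, e.injective.comp hy⟩
  · obtain ⟨N, _, e, x, y, -, -, hN, rfl, rfl, -, -⟩ := exists_isKPStruct_lift hage x y y y
    exact (e.eRelP_comp_iff hn _ _).2 ((hN.1 n hn).2.1 x y σ τ ((e.eRelP_comp_iff hn x y).1 h))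
  · obtain ⟨N, _, e, x, -, -, -, hN, rfl, -, -, -⟩ := exists_isKPStruct_lift hage x x x x
    exact (e.eRelP_comp_iff hn x x).2 ((hN.1 n hn).2.2.1 x hx.of_comp)
  · obtain ⟨N, _, e, x, y, -, -, hN, rfl, rfl, -, -⟩ := exists_isKPStruct_lift hage x y y y
    exact (e.eRelP_comp_iff hn y x).2 ((hN.1 n hn).2.2.2.1 x y ((e.eRelP_comp_iff hn x y).1 h))
  · obtain ⟨N, _, e, x, y, z, -, hN, rfl, rfl, rfl, -⟩ := exists_isKPStruct_lift hage x y z z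
    exact (e.eRelP_comp_iff hn x z).2 ((hN.1 n hn).2.2.2.2 x y z
      ((e.eRelP_comp_iff hn x y).1 hxy) ((e.eRelP_comp_iff hn y z).1 hyz))
  · obtain ⟨N, _, e, x, y, -, -, hN, rfl, rfl, -, -⟩ := exists_isKPStruct_lift hage x y y y
    obtain ⟨hx, hy⟩ := (hN.2 n hn hn0).1 x y ((e.ltRelP_comp_iff hn x y).1 h)
    exact ⟨e.injective.comp hx, e.injective.comp hy⟩
  · obtain ⟨N, _, e, x, x', y, y', hN, rfl, rfl, rfl, rfl⟩ :=
      exists_isKPStruct_lift hage x x' y y'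
    exact (e.ltRelP_comp_iff hn x' y').2 ((hN.2 n hn hn0).2.1 x x' y y'
      ((e.eRelP_comp_iff hn0 x x').1 hxx') ((e.eRelP_comp_iff hn0 y y').1 hyy')
      ((e.ltRelP_comp_iff hn x y).1 h))
  · obtain ⟨N, _, e, x, y, -, -, hN, rfl, rfl, -, -⟩ := exists_isKPStruct_lift hage x y y y
    exact (hN.2 n hn hn0).2.2.1 x y ((e.ltRelP_comp_iff hn x y).1 h)
      ((e.eRelP_comp_iff hn0 x y).1 hE)
  · obtain ⟨N, _, e, x, y, z, -, hN, rfl, rfl, rfl, -⟩ := exists_isKPStruct_lift hage x y z z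
    exact (e.ltRelP_comp_iff hn x z).2 ((hN.2 n hn hn0).2.2.2.1 x y z
      ((e.ltRelP_comp_iff hn x y).1 hxy) ((e.ltRelP_comp_iff hn y z).1 hyz))
  · obtain ⟨N, _, e, x, y, -, -, hN, rfl, rfl, -, -⟩ := exists_isKPStruct_lift hage x y y y
    refine ((hN.2 n hn hn0).2.2.2.2 x y hx.of_comp hy.of_comp
      (mt (e.eRelP_comp_iff hn0 x y).2 hE)).imp ?_ ?_
    · exact (e.ltRelP_comp_iff hn x y).2
    · exact (e.ltRelP_comp_iff hn y x).2

section Expansion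

variable {P : Set ℕ} {T : Type*} [L₀.Structure T]

abbrev expandLT (lt : ∀ n ∈ P, (Fin n → T) → (Fin n → T) → Prop) : (LP P).Structure T where
  funMap F := isEmptyElim F
  RelMap r v := r.elim (fun r => RelMap (L := L₀) r v) fun r =>
    lt r.1 r.2.1 (fun i => v (Fin.cast r.2.2.symm (Fin.castAdd r.1 i)))
      (fun i => v (Fin.cast r.2.2.symm (Fin.natAdd r.1 i)))

variable (lt : ∀ n ∈ P, (Fin n → T) → (Fin n → T) → Prop)

instance : @LHom.IsExpansionOn _ _ (phiP P) T _ (expandLT lt) :=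
  @LHom.IsExpansionOn.mk _ _ (phiP P) T _ (expandLT lt) (fun F => isEmptyElim F) fun _ _ => rfl

theorem eRelP_expandLT {n : ℕ} (hn : 0 < n) (x y : Fin n → T) :
    @ERelP P T (expandLT lt) n hn x y ↔ ERel T n hn x y :=
  Iff.rfl

theorem ltRelP_expandLT {n : ℕ} (hn : n ∈ P) (x y : Fin n → T) :
    @LTRelP P T (expandLT lt) n hn x y ↔ lt n hn x y := by
  show lt n hn (fun i => Fin.append x y (Fin.castAdd n i))
    (fun i => Fin.append x y (Fin.natAdd n i)) ↔ _
  simp only [Fin.append_left, Fin.append_right]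

end Expansion

theorem IsK0Struct.exists_expansion {P : Set ℕ} {T : Type*} [L₀.Structure T]
    (hT : IsK0Struct T) (hP0 : ∀ n ∈ P, 0 < n) (R : ∀ n ∈ P, (Fin n → T) → (Fin n → T) → Prop)
    (hR : ∀ n (hn : n ∈ P), IsStrictOrderMod (ERel T n (hP0 n hn)) (R n hn)) :
    ∃ lt : ∀ n ∈ P, (Fin n → T) → (Fin n → T) → Prop,
      @IsKPStruct P T (expandLT lt) ∧ ∀ n hn x y, R n hn x y → lt n hn x y := by
  choose lt hlt htotal hRlt using fun n hn =>
    (hR n hn).exists_total_extension (hT n (hP0 n hn)).2.2.2.1 (hT n (hP0 n hn)).2.2.2.2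
  refine ⟨lt, ⟨hT, fun n hn hn0 => ?_⟩, hRlt⟩
  obtain ⟨hinj, -, hrefl, -, -⟩ := hT n hn0
  simp only [ltRelP_expandLT, eRelP_expandLT]
  refine ⟨fun x y h => ?_, fun x x' y y' hx hy h => (hlt n hn).congr hx hy h,
    fun x y h => (hlt n hn).not_rel h, fun x y z => (hlt n hn).trans,
    fun x y hx hy => htotal n hn x y (hrefl x hx) (hrefl y hy)⟩
  obtain ⟨hx, hy⟩ := (hlt n hn).dom h
  exact ⟨(hinj x x hx).1, (hinj y y hy).1⟩

section Extension

variable {P : Set ℕ} {A T M : Type*} [L₀.Structure A] [L₀.Structure T] [(LP P).Structure M]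

def pushforwardLT (g : A → T) (f : A → M) (n : ℕ) (hn : n ∈ P) (hn0 : 0 < n)
    (x y : Fin n → T) : Prop :=
  ∃ u v : Fin n → A,
    ERel T n hn0 x (g ∘ u) ∧ ERel T n hn0 y (g ∘ v) ∧ LTRelP P M n hn (f ∘ u) (f ∘ v)

def FirstOrder.Language.Embedding.toExpansion (g : A ↪[L₀] T)
    (f : @Embedding L₀ A M _ ((phiP P).reduct M)) (lt : ∀ n ∈ P, (Fin n → T) → (Fin n → T) → Prop)
    (hlt : ∀ n hn u v, lt n hn (g ∘ u) (g ∘ v) ↔ LTRelP P M n hn (f ∘ u) (f ∘ v)) :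
    @Embedding (LP P) A T (Structure.comap f) (expandLT lt) := by
  let _ := (phiP P).reduct M
  refine @Embedding.mk (LP P) A T (Structure.comap f) (expandLT lt) g.toEmbedding
    (fun F => isEmptyElim F) fun {k} r x => ?_
  rcases r with r | ⟨n, hn, rfl⟩
  · exact (g.map_rel r x).trans (f.map_rel r x).symm
  · obtain ⟨u, v, rfl⟩ : ∃ u v, x = Fin.append u v := ⟨_, _, Fin.append_castAdd_natAdd.symm⟩
    change @RelMap _ _ (expandLT lt) _ _ (g ∘ _) ↔ RelMap _ (f ∘ _)
    rw [Fin.comp_append, Fin.comp_append]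
    exact (ltRelP_expandLT lt hn _ _).trans (hlt n hn u v)

variable (hT : IsK0Struct T) (hM : IsKPStruct P M) (g : A ↪[L₀] T)
  (f : @Embedding L₀ A M _ ((phiP P).reduct M))
include hT hM

theorem isStrictOrderMod_pushforwardLT {n : ℕ} (hn : n ∈ P) (hn0 : 0 < n) :
    IsStrictOrderMod (ERel T n hn0) (pushforwardLT g f n hn hn0) := by
  let _ := (phiP P).reduct M
  obtain ⟨-, -, -, hsymm, htrans⟩ := hT n hn0
  obtain ⟨-, -, hMrefl, hMsymm, -⟩ := hM.1 n hn0
  obtain ⟨hltinj, hltcongr, hltE, hlttrans, -⟩ := hM.2 n hn hn0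
  have hfg (u v : Fin n → A) : ERel T n hn0 (g ∘ u) (g ∘ v) → ERelP P M n hn0 (f ∘ u) (f ∘ v) :=
    fun h => (f.eRel_comp_iff hn0 u v).2 ((g.eRel_comp_iff hn0 u v).1 h)
  refine ⟨fun ⟨u, v, hu, hv, _⟩ => ?_, fun hxx' hyy' ⟨u, v, hu, hv, h⟩ => ?_,
    fun ⟨u, v, hu, hv, h⟩ hE => ?_, fun ⟨u, v, hu, hv, h⟩ ⟨v', w, hv', hw, h'⟩ => ?_⟩
  · exact ⟨htrans _ _ _ hu (hsymm _ _ hu), htrans _ _ _ hv (hsymm _ _ hv)⟩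
  · exact ⟨u, v, htrans _ _ _ (hsymm _ _ hxx') hu, htrans _ _ _ (hsymm _ _ hyy') hv, h⟩
  · exact hltE _ _ h (hfg u v (htrans _ _ _ (hsymm _ _ hu) (htrans _ _ _ hE hv)))
  · have hvv' := hfg v v' (htrans _ _ _ (hsymm _ _ hv) hv')
    exact ⟨u, w, hu, hw, hlttrans _ _ _ h
      (hltcongr _ _ _ _ (hMsymm _ _ hvv') (hMrefl _ (hltinj _ _ h').2) h')⟩

theorem lt_comp_iff_of_pushforwardLT_le {lt : ∀ n ∈ P, (Fin n → T) → (Fin n → T) → Prop}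
    (hlt : @IsKPStruct P T (expandLT lt)) {n : ℕ} (hn : n ∈ P) (hn0 : 0 < n)
    (hRlt : ∀ x y, pushforwardLT g f n hn hn0 x y → lt n hn x y) (u v : Fin n → A) :
    lt n hn (g ∘ u) (g ∘ v) ↔ LTRelP P M n hn (f ∘ u) (f ∘ v) := by
  let _ := (phiP P).reduct M
  obtain ⟨hinj, -, hrefl, -, -⟩ := hT n hn0
  obtain ⟨hltinj, -, hltE, hlttrans, -⟩ := hlt.2 n hn hn0
  simp only [ltRelP_expandLT, eRelP_expandLT] at hltinj hltE hlttrans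
  refine ⟨fun h => ?_, fun h => ?_⟩
  · obtain ⟨hgu, hgv⟩ := hltinj _ _ h
    have hE : ¬ ERelP P M n hn0 (f ∘ u) (f ∘ v) := fun hE =>
      hltE _ _ h ((g.eRel_comp_iff hn0 u v).2 ((f.eRel_comp_iff hn0 u v).1 hE))
    refine ((hM.2 n hn hn0).2.2.2.2 _ _ (f.injective.comp hgu.of_comp)
      (f.injective.comp hgv.of_comp) hE).resolve_right fun h' => ?_
    exact hltE _ _ (hlttrans _ _ _ h (hRlt _ _ ⟨v, u, hrefl _ hgv, hrefl _ hgu, h'⟩)) (hrefl _ hgu)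
  · obtain ⟨hfu, hfv⟩ := (hM.2 n hn hn0).1 _ _ h
    exact hRlt _ _ ⟨u, v, hrefl _ (g.injective.comp hfu.of_comp),
      hrefl _ (g.injective.comp hfv.of_comp), h⟩

end Extension

section Reduct

variable {P : Set ℕ} {M : Type} [(LP P).Structure M]

theorem exists_extension_to_reduct (hP0 : ∀ n ∈ P, 0 < n) (hage : (LP P).age M = KP P)
    (hUH : (LP P).IsUltrahomogeneous M) {T : Type} [L₀.Structure T] [Finite T]
    (hT : IsK0Struct T) {A : Type} [L₀.Structure A] [Finite A] (g : A ↪[L₀] T)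
    (f : @Embedding L₀ A M _ ((phiP P).reduct M)) :
    ∃ f' : @Embedding L₀ T M _ ((phiP P).reduct M), ⇑f = f' ∘ g := by
  let _ := (phiP P).reduct M
  have hM := isKPStruct_of_age_subset hage.le
  obtain ⟨lt, hlt, hRlt⟩ := hT.exists_expansion hP0 _
    fun n hn => isStrictOrderMod_pushforwardLT hT hM g f hn (hP0 n hn)
  let _ := expandLT lt
  let _ := Structure.comap (L := LP P) f
  have : Nonempty (T ↪[LP P] M) :=
    (hage.ge (show (⟨T, expandLT lt⟩ : Bundled _) ∈ KP P from ⟨‹_›, hlt⟩)).2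
  obtain ⟨f', hf'⟩ := hUH.extend_embedding Structure.FG.of_finite (Embedding.ofComap f.injective)
    (g.toExpansion f lt fun n hn =>
      lt_comp_iff_of_pushforwardLT_le hT hM g f hlt hn (hP0 n hn) (hRlt n hn))
  exact ⟨Embedding.reduct (phiP P) f', congrArg DFunLike.coe hf'⟩

theorem age_reduct_eq (hP0 : ∀ n ∈ P, 0 < n) (hage : (LP P).age M = KP P) :
    @age L₀ M ((phiP P).reduct M) = K₀ := by
  let _ := (phiP P).reduct M
  ext ⟨C, _⟩
  constructor
  · rintro ⟨hfg, ⟨e⟩⟩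
    exact ⟨hfg.finite, IsK0Struct.of_embedding (isKPStruct_of_age_subset hage.le).1 e⟩
  · rintro ⟨hfin, hC⟩
    obtain ⟨lt, hlt, -⟩ := hC.exists_expansion hP0 (fun _ _ _ _ => False)
      fun _ _ => ⟨False.elim, fun _ _ => False.elim, fun h => h.elim, fun h => h.elim⟩
    let _ := expandLT lt
    obtain ⟨-, ⟨e⟩⟩ := hage.ge (show (⟨C, expandLT lt⟩ : Bundled _) ∈ KP P from ⟨hfin, hlt⟩)
    exact ⟨Structure.FG.of_finite, ⟨Embedding.reduct (phiP P) e⟩⟩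

theorem isUltrahomogeneous_reduct [Countable M] (hP0 : ∀ n ∈ P, 0 < n)
    (hage : (LP P).age M = KP P) (hUH : (LP P).IsUltrahomogeneous M) :
    @IsUltrahomogeneous L₀ M ((phiP P).reduct M) := by
  let _ := (phiP P).reduct M
  rw [isUltrahomogeneous_iff_IsExtensionPair cg_of_countable,
    isExtensionPair_iff_exists_embedding_closure_singleton_sup]
  intro S hS f m
  let T := Substructure.closure L₀ {m} ⊔ S
  have := hS.finite
  have : Finite T := ((Substructure.fg_closure_singleton m).sup hS).finite
  obtain ⟨f', hf'⟩ := exists_extension_to_reduct hP0 hage hUH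
    (IsK0Struct.of_embedding (isKPStruct_of_age_subset hage.le).1 T.subtype)
    (Substructure.inclusion le_sup_right) f
  exact ⟨f', Embedding.ext (congrFun hf')⟩

end Reduct

/-- the `L₀`-reduct of the Fraïssé limit `M` of `K_P` is a countable
ultrahomogeneous `L₀`-structure with age `K₀`, hence isomorphic to `M₀`; so `M` is an
expansion of `M₀`. -/
theorem KP_limit_reduct_is_M0 (P : Set ℕ) (hP : ∀ n ∈ P, 3 ≤ n)
    (M : Type) [(LP P).Structure M] [Countable M]
    (hUH : (LP P).IsUltrahomogeneous M) (hage : (LP P).age M = KP P)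
    (M₀ : Type) [instM₀ : L₀.Structure M₀] [Countable M₀]
    (hUH₀ : L₀.IsUltrahomogeneous M₀) (hage₀ : L₀.age M₀ = K₀) :
    @Language.IsUltrahomogeneous L₀ M ((phiP P).reduct M) ∧
    @Language.age L₀ M ((phiP P).reduct M) = K₀ ∧
    Nonempty (@Language.Equiv L₀ M M₀ ((phiP P).reduct M) instM₀) := by
  let _ := (phiP P).reduct M
  have hP0 : ∀ n ∈ P, 0 < n := fun n hn => Nat.zero_lt_of_lt (hP n hn)
  have hUH' := isUltrahomogeneous_reduct hP0 hage hUH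
  have hage' := age_reduct_eq hP0 hage
  exact ⟨hUH', hage', IsFraisseLimit.nonempty_equiv ⟨hUH', hage'⟩ ⟨hUH₀, hage₀⟩⟩
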